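/- Let R = ℤ[t]/(t²−1) and let 𝐩 ⊆ R be a prime ideal containing J = (t+1) with 𝐩 ≠ (t+1, 2). Then the localization I_𝐩 of the ideal I = (t−1) at 𝐩 is a free R_𝐩-module of rank 1. -/

import Mathlib

/-!
Since `p` contains `t + 1`, it cannot contain `t - 1` as well: it would then contain `2`, and
every element of `R` is an integer modulo `t + 1`, so a proper ideal containing `t + 1` and `2`
is `(t + 1, 2)`. Hence `t - 1` becomes a unit in `R_p`, and an ideal meeting the localizing
submonoid localizes to the unit ideal.
-/

open Polynomial

abbrev R : Type := ℤ[X] ⧸ Ideal.span ({X ^ 2 - 1} : Set ℤ[X])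

noncomputable def t : R := Ideal.Quotient.mk _ X

namespace Ideal

variable {A : Type*} [CommSemiring A] {S : Submonoid A} {I : Ideal A} {a : A}

theorem localized'_eq_top_of_mem (haS : a ∈ S) (haI : a ∈ I) :
    I.localized' (Localization S) S (Algebra.linearMap A (Localization S)) = ⊤ :=
  eq_top_of_isUnit_mem _ ⟨a, haI, 1, by simp⟩ (IsLocalization.map_units _ ⟨a, haS⟩)

noncomputable def localizedModuleEquivOfMem (haS : a ∈ S) (haI : a ∈ I) :
    LocalizedModule S I ≃ₗ[Localization S] Localization S :=
  have := IsLocalization.linearMap_compatibleSMul S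
  ((IsLocalizedModule.linearEquiv S (LocalizedModule.mkLinearMap S I)
    (I.toLocalized' (Localization S) S (Algebra.linearMap A (Localization S)))).restrictScalars _
    ≪≫ₗ LinearEquiv.ofEq _ _ (localized'_eq_top_of_mem haS haI)) ≪≫ₗ LinearEquiv.ofTop ⊤ rfl

end Ideal

theorem exists_intCast_sub_mem_span_t_add_one (x : R) : ∃ n : ℤ, x - n ∈ Ideal.span {t + 1} := by
  obtain ⟨q, rfl⟩ := Ideal.Quotient.mk_surjective x
  obtain ⟨c, hc⟩ := X_sub_C_dvd_sub_C_eval (a := -1) (p := q)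
  refine ⟨q.eval (-1), Ideal.mem_span_singleton'.mpr ⟨Ideal.Quotient.mk _ c, ?_⟩⟩
  rw [C_neg, C_1, sub_neg_eq_add] at hc
  have hc' := congrArg (Ideal.Quotient.mk (Ideal.span ({X ^ 2 - 1} : Set ℤ[X]))) hc
  simp only [eq_intCast, map_sub, map_mul, map_add, map_one, map_intCast] at hc'
  rw [hc', t, mul_comm]

theorem eq_span_t_add_one_two_of_mem {p : Ideal R} (hp : p ≠ ⊤) (ht : t + 1 ∈ p)
    (h2 : (2 : R) ∈ p) : p = Ideal.span {t + 1, 2} := by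
  refine le_antisymm (fun x hx => ?_) (Ideal.span_le.mpr (by simp [Set.insert_subset_iff, ht, h2]))
  obtain ⟨n, hn⟩ := exists_intCast_sub_mem_span_t_add_one x
  have hnp : (n : R) ∈ p := by
    simpa using p.sub_mem hx ((Ideal.span_singleton_le_iff_mem p).mpr ht hn)
  obtain ⟨k, rfl | rfl⟩ := Int.even_or_odd' n
  · rw [show x = (x - ↑(2 * k)) + k * 2 by push_cast; ring]
    exact add_mem (Ideal.span_mono (by simp) hn)
      (Ideal.mul_mem_left _ _ (Ideal.subset_span (by simp)))
  · refine absurd (p.eq_top_iff_one.mpr ?_) hp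
    rw [show (1 : R) = ↑(2 * k + 1) - k * 2 by push_cast; ring]
    exact p.sub_mem hnp (p.mul_mem_left _ h2)

theorem t_sub_one_notMem {p : Ideal R} (hp : p ≠ ⊤) (ht : t + 1 ∈ p)
    (hne : p ≠ Ideal.span {t + 1, 2}) : t - 1 ∉ p := fun h => by
  have h2 : (2 : R) ∈ p := by
    simpa [sub_sub_cancel_left, ← two_mul] using p.sub_mem ht h
  exact hne (eq_span_t_add_one_two_of_mem hp ht h2)

/-- If 𝐩 is a prime of R containing J = (t+1) with 𝐩 ≠ (t+1, 2), then the
localization I_𝐩 of I = (t−1) at 𝐩 is a free R_𝐩-module of rank 1,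
i.e. isomorphic to R_𝐩. -/
theorem I_localized_free_rank_one (p : Ideal R) (hp : p.IsPrime)
    (hJ : Ideal.span {t + 1} ≤ p) (hne : p ≠ Ideal.span {t + 1, 2}) :
    Nonempty ((LocalizedModule p.primeCompl (Ideal.span {t - 1} : Ideal R))
      ≃ₗ[Localization p.primeCompl] Localization p.primeCompl) := by
  have ht : t + 1 ∈ p := hJ (Ideal.mem_span_singleton_self _)
  exact ⟨Ideal.localizedModuleEquivOfMem (t_sub_one_notMem hp.ne_top ht hne)
    (Ideal.mem_span_singleton_self _)⟩
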